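/- arXiv:1904.10790 — 8 statements merged into one kernel-verified Lean document; each statement's English description precedes it below -/
import Mathlib

section
/- Let R be a commutative ring and A ∈ Mat_{m×n}(R) with m ≤ n. Then for every j < m one has Ann.Coker(A) · I_j(A) ⊆ I_{j+1}(A), and moreover Ann.Coker(A)^m ⊆ I_m(A) ⊆ Ann.Coker(A) ⊆ √(I_m(A)). -/
/-- The determinantal ideal `I_j(A)` generated by the `j × j` minors of `A`
(with `I_0(A) = R`). -/
def detIdeal {R : Type*} [CommRing R] {m n : ℕ} (A : Matrix (Fin m) (Fin n) R)
    (j : ℕ) : Ideal R :=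
  Ideal.span { x | ∃ (r : Fin j → Fin m) (c : Fin j → Fin n), x = (A.submatrix r c).det }

/-- `Ann.Coker(A) = Ann(R^m / A(R^n))`, the annihilator of the cokernel of `A`. -/
noncomputable def annCoker {R : Type*} [CommRing R] {m n : ℕ}
    (A : Matrix (Fin m) (Fin n) R) : Ideal R :=
  Module.annihilator R ((Fin m → R) ⧸ LinearMap.range A.mulVecLin)

/-!
If `a` annihilates the cokernel of `A`, then `a • eᵢ = A v` for some `v`. Given a `j × j` minor
with row set `r` and a row `i ∉ r` (which exists when `j < m`), expanding each `(j+1) × (j+1)`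
minor with rows `r ∪ {i}` and columns `c ∪ {k}` along its last column and summing against `v k`
leaves exactly `a` times the original minor; hence `Ann.Coker(A) · I_j(A) ⊆ I_{j+1}(A)`, and
iterating from `I_0(A) = R` gives `Ann.Coker(A)^m ⊆ I_m(A)`. Conversely, for a maximal minor
`M = A_{·,c}`, Cramer's rule `M · adj M = det M · 1` exhibits `det M • x` in the image of `A`.
-/

open Matrix

section

variable {R : Type*} [CommRing R] {m n : ℕ}

lemma mem_annCoker_iff (A : Matrix (Fin m) (Fin n) R) {a : R} :
    a ∈ annCoker A ↔ ∀ x : Fin m → R, a • x ∈ LinearMap.range A.mulVecLin := by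
  simp [annCoker, Submodule.annihilator_quotient, Submodule.mem_colon]

lemma det_submatrix_mem_detIdeal (A : Matrix (Fin m) (Fin n) R) {j : ℕ} (r : Fin j → Fin m)
    (c : Fin j → Fin n) : (A.submatrix r c).det ∈ detIdeal A j :=
  Ideal.subset_span ⟨r, c, rfl⟩

lemma detIdeal_zero (A : Matrix (Fin m) (Fin n) R) : detIdeal A 0 = ⊤ :=
  (Ideal.eq_top_iff_one _).2 <| by simpa using det_submatrix_mem_detIdeal A Fin.elim0 Fin.elim0

lemma sum_mul_det_submatrix_snoc (A : Matrix (Fin m) (Fin n) R) {j : ℕ}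
    (r : Fin (j + 1) → Fin m) (c : Fin j → Fin n) (v : Fin n → R) :
    ∑ k, v k * (A.submatrix r (Fin.snoc c k)).det =
      ∑ p : Fin (j + 1),
        (-1) ^ ((p : ℕ) + j) * (A *ᵥ v) (r p) * (A.submatrix (r ∘ p.succAbove) c).det := by
  simp_rw [det_succ_column _ (Fin.last j), Finset.mul_sum]
  rw [Finset.sum_comm]
  refine Finset.sum_congr rfl fun p _ => ?_
  simp only [mulVec, dotProduct, submatrix_apply, submatrix_submatrix, Fin.snoc_last,
    Fin.succAbove_last, Fin.val_last, Fin.snoc_comp_castSucc, Finset.mul_sum, Finset.sum_mul]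
  exact Finset.sum_congr rfl fun k _ => by ring

lemma mul_det_submatrix_mem_detIdeal {A : Matrix (Fin m) (Fin n) R} {a : R} (ha : a ∈ annCoker A)
    {j : ℕ} (r : Fin j → Fin m) (c : Fin j → Fin n) {i : Fin m} (hi : i ∉ Set.range r) :
    a * (A.submatrix r c).det ∈ detIdeal A (j + 1) := by
  obtain ⟨v, hv⟩ := (mem_annCoker_iff A).1 ha (Pi.single i 1)
  replace hv : A *ᵥ v = Pi.single i a := by simpa [← Pi.single_smul] using hv
  have hr : ∀ q, r q ≠ i := fun q h => hi ⟨q, h⟩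
  have expansion : ∑ k, v k * (A.submatrix (Fin.snoc r i) (Fin.snoc c k)).det =
      a * (A.submatrix r c).det := by
    rw [sum_mul_det_submatrix_snoc, Fin.sum_univ_castSucc,
      Finset.sum_eq_zero fun q _ => by simp [hv, hr q], zero_add]
    simp [hv]
  rw [← expansion]
  exact Ideal.sum_mem _ fun k _ => Ideal.mul_mem_left _ _ (det_submatrix_mem_detIdeal A _ _)

lemma annCoker_mul_detIdeal_le (A : Matrix (Fin m) (Fin n) R) {j : ℕ} (hj : j < m) :
    annCoker A * detIdeal A j ≤ detIdeal A (j + 1) := by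
  refine Ideal.mul_le.2 fun a ha b hb => ?_
  suffices detIdeal A j ≤ Submodule.comap (LinearMap.mulLeft R a) (detIdeal A (j + 1)) from
    this hb
  refine Submodule.span_le.2 ?_
  rintro _ ⟨r, c, rfl⟩
  have : ¬ Function.Surjective r := fun h =>
    hj.not_ge (by simpa using Fintype.card_le_of_surjective r h)
  obtain ⟨i, hi⟩ := not_forall.1 this
  exact mul_det_submatrix_mem_detIdeal ha r c hi

lemma annCoker_pow_le_detIdeal (A : Matrix (Fin m) (Fin n) R) {j : ℕ} (hj : j ≤ m) :
    annCoker A ^ j ≤ detIdeal A j := by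
  induction j with
  | zero => simp [detIdeal_zero]
  | succ j ih =>
    calc annCoker A ^ (j + 1) = annCoker A * annCoker A ^ j := pow_succ' _ _
      _ ≤ annCoker A * detIdeal A j := Ideal.mul_mono_right (ih (by omega))
      _ ≤ detIdeal A (j + 1) := annCoker_mul_detIdeal_le A hj

lemma det_submatrix_id_mem_annCoker (A : Matrix (Fin m) (Fin n) R) (c : Fin m → Fin n) :
    (A.submatrix id c).det ∈ annCoker A := by
  classical
  refine (mem_annCoker_iff A).2 fun x => ⟨(1 : Matrix (Fin n) (Fin n) R).submatrix id c *ᵥ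
    ((A.submatrix id c).adjugate *ᵥ x), ?_⟩
  have hA : A * (1 : Matrix (Fin n) (Fin n) R).submatrix id c = A.submatrix id c :=
    mul_submatrix_one (Equiv.refl (Fin n)) c A
  rw [mulVecLin_apply, mulVec_mulVec, mulVec_mulVec, hA, mul_adjugate,
    smul_mulVec, one_mulVec]

lemma det_submatrix_mem_annCoker (A : Matrix (Fin m) (Fin n) R) (r : Fin m → Fin m)
    (c : Fin m → Fin n) : (A.submatrix r c).det ∈ annCoker A := by
  by_cases hr : Function.Injective r
  · have := det_permute (Equiv.ofBijective r hr.bijective_of_finite) (A.submatrix id c)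
    simp only [Equiv.coe_ofBijective, submatrix_submatrix, CompTriple.comp_eq] at this
    rw [this]
    exact Ideal.mul_mem_left _ _ (det_submatrix_id_mem_annCoker A c)
  · obtain ⟨p, q, hpq, hne⟩ := Function.not_injective_iff.mp hr
    rw [det_zero_of_row_eq hne (by ext; simp [hpq])]
    exact zero_mem _

lemma detIdeal_le_annCoker (A : Matrix (Fin m) (Fin n) R) : detIdeal A m ≤ annCoker A :=
  Submodule.span_le.2 fun _ ⟨r, c, hx⟩ => hx ▸ det_submatrix_mem_annCoker A r c

end

theorem stmt_6_general {R : Type*} [CommRing R] {m n : ℕ}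
    (A : Matrix (Fin m) (Fin n) R) :
    (∀ j < m, annCoker A * detIdeal A j ≤ detIdeal A (j + 1)) ∧
      annCoker A ^ m ≤ detIdeal A m ∧
      detIdeal A m ≤ annCoker A ∧
      annCoker A ≤ (detIdeal A m).radical :=
  ⟨fun _ => annCoker_mul_detIdeal_le A, annCoker_pow_le_detIdeal A le_rfl,
    detIdeal_le_annCoker A,
    fun _ ha => ⟨m, annCoker_pow_le_detIdeal A le_rfl (Ideal.pow_mem_pow ha m)⟩⟩

/-- For `A ∈ Mat_{m×n}(R)`, `m ≤ n`: for all `j < m`,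
`Ann.Coker(A) · I_j(A) ⊆ I_{j+1}(A)`, and
`Ann.Coker(A)^m ⊆ I_m(A) ⊆ Ann.Coker(A) ⊆ √(I_m(A))`. -/
theorem stmt_6 {R : Type*} [CommRing R] {m n : ℕ} (hmn : m ≤ n)
    (A : Matrix (Fin m) (Fin n) R) :
    (∀ j < m, annCoker A * detIdeal A j ≤ detIdeal A (j + 1)) ∧
      annCoker A ^ m ≤ detIdeal A m ∧
      detIdeal A m ≤ annCoker A ∧
      annCoker A ≤ (detIdeal A m).radical :=
  stmt_6_general A
end

section
/- Let R be a commutative ring and A ∈ Mat_{m×m}(R) a square matrix such that det(A) is not a zero divisor. Then Ann.Coker(A) = I_m(A) : I_{m-1}(A). -/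
/-!
Both ideals are described by the adjugate. Since `adj(A) A = det(A) • 1` and `det(A)` is
regular, `v ∈ A(R^m)` iff `det(A)` divides every entry of `adj(A) v`; so `x` kills the cokernel
iff `det(A) ∣ x · adj(A)_{ij}` for all `i, j`. On the other side, `I_m(A) = (det A)`, and
`I_{m-1}(A)` is generated by the entries of `adj(A)`, which are the `(m-1)`-minors up to sign;
every other `(m-1)`-minor is a multiple of one of these, because a map `Fin (m-1) → Fin m`
misses some index and hence factors through the corresponding `succAbove`.
-/

theorem Fin.exists_eq_succAbove_comp {n : ℕ} (f : Fin n → Fin (n + 1)) :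
    ∃ (p : Fin (n + 1)) (g : Fin n → Fin n), f = p.succAbove ∘ g := by
  obtain ⟨p, hp⟩ : ∃ p, p ∉ Set.range f := by
    by_contra! h
    simpa using Fintype.card_le_of_surjective f h
  obtain ⟨g, hg⟩ : ∃ g, f = p.succAbove ∘ g := by
    rw [← Set.range_subset_range_iff_exists_comp, Fin.range_succAbove]
    exact Set.subset_compl_singleton_iff.2 hp
  exact ⟨p, g, hg⟩

section

open Matrix

variable {R : Type*} [CommRing R]

theorem Matrix.det_dvd_det_submatrix {n : Type*} [Fintype n] [DecidableEq n]
    (B : Matrix n n R) (r c : n → n) : B.det ∣ (B.submatrix r c).det := by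
  have h : B.submatrix r c =
      (1 : Matrix n n R).submatrix r id * B * (1 : Matrix n n R).submatrix id c := by
    ext i j; simp [mul_apply, one_apply]
  rw [h, det_mul, det_mul]
  exact (dvd_mul_left _ _).mul_right _

theorem Matrix.mem_range_mulVecLin_iff {n : Type*} [Fintype n] [DecidableEq n]
    {A : Matrix n n R} (hdet : A.det ∈ nonZeroDivisors R) (v : n → R) :
    v ∈ LinearMap.range A.mulVecLin ↔ ∀ i, (A.adjugate *ᵥ v) i ∈ Ideal.span {A.det} := by
  constructor
  · rintro ⟨w, rfl⟩ i
    rw [mulVecLin_apply, mulVec_mulVec, adjugate_mul, smul_mulVec, one_mulVec]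
    exact Ideal.mem_span_singleton.2 (dvd_mul_right _ _)
  · intro h
    choose w hw using fun i => Ideal.mem_span_singleton.1 (h i)
    have hadj : A.adjugate *ᵥ v = A.det • w := funext hw
    refine ⟨w, funext fun i => (mul_cancel_left_mem_nonZeroDivisors hdet).1 ?_⟩
    calc A.det * (A *ᵥ w) i = (A *ᵥ (A.det • w)) i := by rw [mulVec_smul]; rfl
      _ = A.det * v i := by
        rw [← hadj, mulVec_mulVec, mul_adjugate, smul_mulVec, one_mulVec]
        rfl

theorem mem_annCoker_iff_s7 {k : ℕ} {A : Matrix (Fin k) (Fin k) R}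
    (hdet : A.det ∈ nonZeroDivisors R) (x : R) :
    x ∈ annCoker A ↔ ∀ i j, x * A.adjugate i j ∈ Ideal.span {A.det} := by
  rw [annCoker, Submodule.annihilator_quotient, ← Submodule.top_coe (R := R),
    ← (Pi.basisFun R (Fin k)).span_eq, Submodule.colon_span, Submodule.mem_colon,
    Set.forall_mem_range, forall_comm]
  simp [mem_range_mulVecLin_iff hdet, mulVec_smul]

theorem detIdeal_self {k : ℕ} (A : Matrix (Fin k) (Fin k) R) :
    detIdeal A k = Ideal.span {A.det} := by
  refine le_antisymm (Ideal.span_le.2 ?_) (Ideal.span_le.2 ?_)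
  · rintro _ ⟨r, c, rfl⟩
    exact Ideal.mem_span_singleton.2 (A.det_dvd_det_submatrix r c)
  · rintro _ rfl
    exact Ideal.subset_span ⟨id, id, by simp⟩

theorem detIdeal_eq_span_adjugate {n : ℕ} (A : Matrix (Fin (n + 1)) (Fin (n + 1)) R) :
    detIdeal A n = Ideal.span {x | ∃ i j, A.adjugate i j = x} := by
  refine le_antisymm (Ideal.span_le.2 ?_) (Ideal.span_le.2 ?_)
  · rintro _ ⟨r, c, rfl⟩
    obtain ⟨p, r', rfl⟩ := Fin.exists_eq_succAbove_comp r
    obtain ⟨q, c', rfl⟩ := Fin.exists_eq_succAbove_comp c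
    have hminor :
        (A.submatrix p.succAbove q.succAbove).det = (-1) ^ (p + q : ℕ) * A.adjugate q p := by
      rw [adjugate_fin_succ_eq_det_submatrix, ← mul_assoc, ← pow_add,
        Even.neg_one_pow ⟨_, rfl⟩, one_mul]
    obtain ⟨d, hd⟩ := (A.submatrix p.succAbove q.succAbove).det_dvd_det_submatrix r' c'
    rw [← submatrix_submatrix, hd, hminor, mul_assoc]
    exact Ideal.mul_mem_left _ _ (Ideal.mul_mem_right _ _ (Ideal.subset_span ⟨q, p, rfl⟩))
  · rintro _ ⟨i, j, rfl⟩
    rw [adjugate_fin_succ_eq_det_submatrix]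
    exact Ideal.mul_mem_left _ _ (Ideal.subset_span ⟨_, _, rfl⟩)

end

/-- If `A` is square and `det(A)` is not a zero divisor, then
`Ann.Coker(A) = I_m(A) : I_{m-1}(A)`. -/
theorem stmt_7 {R : Type*} [CommRing R] {m : ℕ} (A : Matrix (Fin m) (Fin m) R)
    (hdet : A.det ∈ nonZeroDivisors R) :
    annCoker A = (detIdeal A m).colon (detIdeal A (m - 1)) := by
  ext x
  rw [mem_annCoker_iff_s7 hdet, detIdeal_self]
  cases m with
  | zero => simp
  | succ n =>
    rw [Nat.add_sub_cancel, detIdeal_eq_span_adjugate, Ideal.colon_span, Submodule.mem_colon]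
    exact ⟨fun h _ ⟨i, j, hij⟩ ↦ hij ▸ h i j, fun h i j ↦ h _ ⟨i, j, rfl⟩⟩
end

section
/- Let R be a commutative ring and A ∈ Mat_{m×m}(R) with det(A) not a zero divisor. Then Ann.Coker(A) = Ann.Coker(A^T), where A^T is the transpose. -/
/-!
`f` annihilates the cokernel of `A` exactly when `A * B = f • 1` for some matrix `B`.
If `det A` is a non-zero-divisor, such a right "`f`-inverse" is also a left one:
multiplying `A * B * A = f • A` on the left by `adj A` gives `det A • (B * A) = det A • (f • 1)`.
Transposing `B * A = f • 1` then shows that `Bᵀ` is an `f`-inverse of `Aᵀ`.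
-/

open Matrix

section

variable {R : Type*} [CommRing R]

theorem mem_annCoker_iff_forall_exists_mulVec {m n : ℕ} (A : Matrix (Fin m) (Fin n) R)
    (f : R) : f ∈ annCoker A ↔ ∀ v, ∃ w, A *ᵥ w = f • v := by
  rw [annCoker, Submodule.annihilator_quotient, Submodule.mem_colon]
  simp only [Set.mem_univ, forall_const, LinearMap.mem_range, mulVecLin_apply]

theorem mem_annCoker_iff_s9 {m n : ℕ} (A : Matrix (Fin m) (Fin n) R) (f : R) :
    f ∈ annCoker A ↔ ∃ B : Matrix (Fin n) (Fin m) R, A * B = f • 1 := by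
  rw [mem_annCoker_iff_forall_exists_mulVec]
  constructor
  · intro hf
    choose w hw using fun j => hf (Pi.single j 1)
    refine ⟨(Matrix.of w)ᵀ, ext_of_mulVec_single fun j => ?_⟩
    rw [← mulVec_mulVec, mulVec_single_one, col_transpose, smul_mulVec, one_mulVec]
    exact hw j
  · rintro ⟨B, hB⟩ v
    exact ⟨B *ᵥ v, by rw [mulVec_mulVec, hB, smul_mulVec, one_mulVec]⟩

theorem Matrix.mul_eq_smul_one_comm {n : Type*} [Fintype n] [DecidableEq n]
    {A B : Matrix n n R} {f : R} (hA : A.det ∈ nonZeroDivisors R) :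
    A * B = f • 1 ↔ B * A = f • 1 := by
  suffices key : ∀ {A B : Matrix n n R}, A.det ∈ nonZeroDivisors R →
      A * B = f • 1 → B * A = f • 1 by
    refine ⟨key hA, fun h => ?_⟩
    have hT := key (A := Aᵀ) (B := Bᵀ) (by rwa [det_transpose])
      (by rw [← transpose_mul, h, transpose_smul, transpose_one])
    simpa [← transpose_mul] using congrArg transpose hT
  intro A B hA hAB
  apply (isRegular_iff_mem_nonZeroDivisors.mpr hA).left.matrix
  calc A.det • (B * A) = adjugate A * (A * B) * A := by
        rw [← Matrix.mul_assoc, adjugate_mul, smul_mul, Matrix.one_mul, smul_mul]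
    _ = A.det • (f • 1) := by
        rw [hAB, Matrix.mul_smul, Matrix.mul_one, smul_mul, adjugate_mul, smul_comm]

theorem mem_annCoker_transpose_of_mem {m : ℕ} {A : Matrix (Fin m) (Fin m) R}
    (hA : A.det ∈ nonZeroDivisors R) {f : R} (hf : f ∈ annCoker A) : f ∈ annCoker Aᵀ := by
  obtain ⟨B, hB⟩ := (mem_annCoker_iff_s9 A f).mp hf
  refine (mem_annCoker_iff_s9 Aᵀ f).mpr ⟨Bᵀ, ?_⟩
  rw [← transpose_mul, (mul_eq_smul_one_comm hA).mp hB, transpose_smul, transpose_one]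

end

/-- If `det(A)` is not a zero divisor then
`Ann.Coker(A) = Ann.Coker(Aᵀ)`. -/
theorem stmt_9 {R : Type*} [CommRing R] {m : ℕ} (A : Matrix (Fin m) (Fin m) R)
    (hdet : A.det ∈ nonZeroDivisors R) :
    annCoker A = annCoker A.transpose := by
  have hdetT : Aᵀ.det ∈ nonZeroDivisors R := by rwa [det_transpose]
  refine le_antisymm (fun f => mem_annCoker_transpose_of_mem hdet) fun f hf => ?_
  simpa using mem_annCoker_transpose_of_mem hdetT hf
end

section
/- Let R be a unique factorization domain and A ∈ Mat_{m×m}(R) a square matrix with det(A) ≠ 0. Then Ann.Coker(A) is a principal ideal. -/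
/-!
Since `adj A * A = A * adj A = det A • 1` and `det A ≠ 0`, a vector `v` lies in the column space
of `A` iff `det A` divides every entry of `adj A *ᵥ v`. Hence `r` annihilates the cokernel iff
`det A ∣ r * c` for every entry `c` of `adj A`, i.e. `Ann.Coker(A)` is the colon ideal
`(det A) : (entries of adj A)`. In a GCD domain such a colon ideal by finitely many elements is
the colon ideal by their gcd, and `(a) : (c)` is generated by `a / gcd a c`.
-/

open Ideal Matrix

section GCDDomain

variable {R : Type*} [CommRing R]

theorem Ideal.isPrincipal_span_singleton_colon_singleton [IsDomain R] [GCDMonoid R] (a c : R) :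
    ((span {a}).colon {c}).IsPrincipal := by
  by_cases hd : gcd a c = 0
  · obtain ⟨rfl, rfl⟩ := (gcd_eq_zero_iff a c).mp hd
    exact ⟨1, by ext r; simp⟩
  obtain ⟨g, hg⟩ := gcd_dvd_left a c
  refine ⟨g, Submodule.ext fun r ↦ ?_⟩
  rw [Submodule.mem_colon_singleton, smul_eq_mul, submodule_span_eq, mem_span_singleton,
    mem_span_singleton, ← dvd_mul_gcd_iff_dvd_mul]
  set d := gcd a c
  rw [hg, mul_comm d, mul_dvd_mul_iff_right hd]

theorem Ideal.span_singleton_colon_finset [NormalizedGCDMonoid R] (a : R) (s : Finset R) :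
    (span {a}).colon (s : Set R) = (span {a}).colon {s.gcd id} := by
  ext r
  simp only [Submodule.mem_colon, Finset.mem_coe, Set.mem_singleton_iff, forall_eq, smul_eq_mul,
    mem_span_singleton]
  rw [← (s.gcd_mul_left' id r).dvd_iff_dvd_right, Finset.dvd_gcd_iff]
  rfl

theorem Ideal.isPrincipal_span_singleton_colon_of_finite [IsDomain R] [IsGCDMonoid R] (a : R)
    {S : Set R} (hS : S.Finite) : ((span {a}).colon S).IsPrincipal := by
  let : NormalizedGCDMonoid R := Classical.arbitrary _
  obtain ⟨s, rfl⟩ := hS.exists_finset_coe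
  rw [span_singleton_colon_finset]
  exact isPrincipal_span_singleton_colon_singleton a _

end GCDDomain

theorem Matrix.mem_range_mulVecLin_iff_det_dvd {n R : Type*} [Fintype n] [DecidableEq n]
    [CommRing R] [IsDomain R] {A : Matrix n n R} (hA : A.det ≠ 0) (v : n → R) :
    v ∈ LinearMap.range A.mulVecLin ↔ ∀ i, A.det ∣ (A.adjugate *ᵥ v) i := by
  constructor
  · rintro ⟨w, rfl⟩ i
    rw [mulVecLin_apply, mulVec_mulVec, adjugate_mul, smul_mulVec, one_mulVec]
    exact dvd_mul_right _ _
  · intro h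
    choose w hw using h
    have hdet_w : A.det • w = A.adjugate *ᵥ v := funext fun i ↦ (hw i).symm
    refine ⟨w, smul_right_injective _ hA ?_⟩
    dsimp only
    rw [mulVecLin_apply, ← mulVec_smul, hdet_w, mulVec_mulVec, mul_adjugate, smul_mulVec,
      one_mulVec]

theorem annCoker_eq_colon_adjugate {R : Type*} [CommRing R] [IsDomain R] {m : ℕ}
    {A : Matrix (Fin m) (Fin m) R} (hA : A.det ≠ 0) :
    annCoker A = (span {A.det}).colon (Set.range (Function.uncurry A.adjugate)) := by
  ext r
  rw [annCoker, Submodule.annihilator_quotient, Submodule.mem_colon, Submodule.mem_colon]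
  simp only [Set.mem_univ, true_implies, Set.forall_mem_range, Function.uncurry, Prod.forall,
    mem_range_mulVecLin_iff_det_dvd hA, mulVec_smul, Pi.smul_apply, smul_eq_mul,
    mem_span_singleton]
  refine ⟨fun h i j ↦ by simpa using h (Pi.single j 1) i, fun h v i ↦ ?_⟩
  simp only [mulVec, dotProduct, Finset.mul_sum, ← mul_assoc]
  exact Finset.dvd_sum fun j _ ↦ (h i j).mul_right (v j)

/-- Over a UFD, for a square matrix `A` with `det(A) ≠ 0`,
the ideal `Ann.Coker(A)` is principal. -/
theorem stmt_10 {R : Type*} [CommRing R] [IsDomain R] [UniqueFactorizationMonoid R]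
    {m : ℕ} (A : Matrix (Fin m) (Fin m) R) (hdet : A.det ≠ 0) :
    (annCoker A).IsPrincipal := by
  rw [annCoker_eq_colon_adjugate hdet]
  exact isPrincipal_span_singleton_colon_of_finite _ (Set.finite_range _)
end

section
/- In the ring R = k[[x,y,z,w]]/(xy − zw), the ideal Ann.Coker of the diagonal matrix A = diag(x, z) equals (x) ∩ (z) = (xz, xy), and this ideal is not principal. -/
theorem mem_annCoker_diagonal {R : Type*} [CommRing R] {m : ℕ} (d : Fin m → R) (r : R) :
    r ∈ annCoker (Matrix.diagonal d) ↔ ∀ i, d i ∣ r := by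
  simp only [annCoker, Module.mem_annihilator, Submodule.Quotient.forall,
    ← Submodule.Quotient.mk_smul, Submodule.Quotient.mk_eq_zero, LinearMap.mem_range,
    Matrix.mulVecLin_apply, funext_iff, Matrix.mulVec_diagonal, Pi.smul_apply, smul_eq_mul]
  constructor
  · intro h i
    obtain ⟨u, hu⟩ := h (Pi.single i 1)
    exact ⟨u i, by simpa using (hu i).symm⟩
  · intro h v
    choose c hc using h
    exact ⟨fun i => c i * v i, fun i => by rw [hc i]; ring⟩

theorem annCoker_diagonal_two {R : Type*} [CommRing R] (a b : R) :
    annCoker !![a, 0; 0, b] = Ideal.span {a} ⊓ Ideal.span {b} := by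
  ext r
  rw [← Matrix.diagonal_vec2, mem_annCoker_diagonal, Fin.forall_fin_two, Submodule.mem_inf,
    Ideal.mem_span_singleton, Ideal.mem_span_singleton]
  rfl

open Ideal

theorem Submodule.IsPrincipal.of_span_mul_pair {A : Type*} [CommRing A] [IsDomain A]
    {a b c : A} (ha : a ≠ 0) (h : (Ideal.span {a * b, a * c}).IsPrincipal) :
    (Ideal.span {b, c}).IsPrincipal := by
  have hfactor : Ideal.span {a * b, a * c} = Ideal.span {a} * Ideal.span {b, c} := by
    rw [Ideal.span_mul_span', Set.singleton_mul, Set.image_pair]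
  obtain ⟨d, hd⟩ := h
  have hd_mem : d ∈ Ideal.span {a} * Ideal.span {b, c} := by
    rw [← hfactor, hd]
    exact Submodule.mem_span_singleton_self d
  obtain ⟨e, rfl⟩ : a ∣ d :=
    Ideal.mem_span_singleton.mp (Ideal.mul_le_left (J := Ideal.span {b, c}) hd_mem)
  refine ⟨⟨e, (Ideal.span_singleton_mul_right_inj ha).mp ?_⟩⟩
  rw [← hfactor, Ideal.span_singleton_mul_span_singleton]
  exact hd

theorem isUnit_of_span_pair_eq_span_singleton {A : Type*} [CommRing A] {p q d : A}
    (hp : Irreducible p) (hpq : ¬ p ∣ q) (h : span {p, q} = span {d}) : IsUnit d := by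
  have hdvd : ∀ r ∈ ({p, q} : Set A), d ∣ r := fun r hr =>
    mem_span_singleton.mp (h ▸ subset_span hr)
  obtain ⟨e, hpe⟩ := hdvd p (by simp)
  refine (hp.isUnit_or_isUnit hpe).resolve_right fun he => hpq ?_
  exact (Associated.symm ⟨he.unit, hpe.symm⟩).dvd.trans (hdvd q (by simp))

theorem span_inf_span_eq_span_pair_of_ker_eq {P Q : Type*} [CommRing P] [CommRing Q]
    {x y z w : P} (π : P →+* Q) (hπ : Function.Surjective π)
    (hker : RingHom.ker π = span {x * y - z * w}) (hx : Prime x) (hxz : ¬ x ∣ z) :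
    span {π x} ⊓ span {π z} = span {π x * π z, π x * π y} := by
  have hxy : π x * π y = π z * π w := by
    rw [← map_mul, ← map_mul, ← sub_eq_zero, ← map_sub, ← RingHom.mem_ker, hker]
    exact mem_span_singleton_self _
  refine le_antisymm (fun r hr => ?_) ?_
  · obtain ⟨⟨f, rfl⟩, g, hg⟩ := And.imp mem_span_singleton'.mp mem_span_singleton'.mp hr
    obtain ⟨F, rfl⟩ := hπ f
    obtain ⟨G, rfl⟩ := hπ g
    obtain ⟨H, hH⟩ : ∃ H, H * (x * y - z * w) = F * x - G * z := by
      rw [← mem_span_singleton', ← hker, RingHom.mem_ker, map_sub, map_mul, map_mul, hg,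
        sub_self]
    obtain ⟨T, hT⟩ : x ∣ G - w * H :=
      (hx.dvd_or_dvd ⟨F - y * H, by linear_combination hH⟩).resolve_left hxz
    refine mem_span_pair.mpr ⟨π T, π H, ?_⟩
    rw [← hg, show G = w * H + x * T by linear_combination hT, map_add, map_mul, map_mul]
    linear_combination π H * hxy
  · simp only [span_le, Set.insert_subset_iff, Set.singleton_subset_iff, SetLike.mem_coe,
      mem_inf, mem_span_singleton]
    exact ⟨⟨dvd_mul_right _ _, dvd_mul_left _ _⟩, dvd_mul_right _ _,
      hxy ▸ dvd_mul_right _ _⟩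

namespace MvPowerSeries

variable {σ R : Type*}

-- `killCompl` along the inclusion of the other variables is the substitution `X i ↦ 0`.
theorem killCompl_eq_zero_iff_X_dvd [CommSemiring R] (i : σ) (p : MvPowerSeries σ R) :
    killCompl (Function.Embedding.subtype (· ≠ i)) p = 0 ↔ X i ∣ p := by
  rw [X_dvd_iff, MvPowerSeries.ext_iff]
  simp only [coeff_killCompl, map_zero]
  constructor
  · intro h m hm
    have hsupp : ↑m.support ⊆ Set.range (Function.Embedding.subtype (· ≠ i)) := fun j hj =>
      ⟨⟨j, fun hji => by simp_all⟩, rfl⟩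
    rw [← Finsupp.embDomain_comapDomain hsupp]
    exact h _
  · intro h x
    exact h _ (Finsupp.embDomain_of_notMem_range _ _ _ (by simp))

theorem X_prime [CommRing R] [IsDomain R] (i : σ) : Prime (X i : MvPowerSeries σ R) := by
  refine ⟨nonZeroDivisors.ne_zero X_mem_nonzeroDivisors,
    fun hu => by simpa using hu.map constantCoeff, fun f g hfg => ?_⟩
  simp only [← killCompl_eq_zero_iff_X_dvd, map_mul, mul_eq_zero] at hfg ⊢
  exact hfg

theorem not_X_dvd_X [CommSemiring R] [Nontrivial R] {i j : σ} (hij : i ≠ j) :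
    ¬ (X i : MvPowerSeries σ R) ∣ X j := by
  rw [X_dvd_iff]
  intro h
  simpa [coeff_X] using h (Finsupp.single j 1) (Finsupp.single_eq_of_ne hij)

theorem not_isPrincipal_span_X_pair [CommRing R] [IsDomain R] {i j : σ} (hij : i ≠ j) :
    ¬ (Ideal.span {X i, X j} : Ideal (MvPowerSeries σ R)).IsPrincipal := by
  rintro ⟨d, hd⟩
  have hunit :=
    isUnit_of_span_pair_eq_span_singleton (X_prime i).irreducible (not_X_dvd_X hij) hd
  have hle : Ideal.span {X i, X j} ≤ RingHom.ker (constantCoeff (σ := σ) (R := R)) := by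
    simp [Ideal.span_le, Set.insert_subset_iff]
  rw [hd, Ideal.submodule_span_eq, Ideal.span_singleton_eq_top.mpr hunit, top_le_iff] at hle
  exact RingHom.ker_ne_top _ hle

end MvPowerSeries

open MvPowerSeries in
theorem not_isPrincipal_span_mul_pair_of_ringHom {Q σ R : Type*} [CommRing Q] [CommRing R]
    [IsDomain R] (φ : Q →+* MvPowerSeries σ R) {x y z : Q} {i j : σ} (hij : i ≠ j)
    (hx : φ x = X i) (hy : φ y = X j) (hz : φ z = X i) :
    ¬ (Ideal.span {x * z, x * y}).IsPrincipal := fun h => by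
  have : IsDomain (MvPowerSeries σ R) := NoZeroDivisors.to_isDomain _
  have h' := h.map_ringHom φ
  rw [Ideal.map_span, Set.image_pair, map_mul, map_mul, hx, hy, hz] at h'
  exact not_isPrincipal_span_X_pair hij (h'.of_span_mul_pair (X_prime i).ne_zero)

/-- In `R = k[[x,y,z,w]]/(xy − zw)`,
`Ann.Coker(diag(x, z)) = (x) ∩ (z) = (xz, xy)`, and this ideal is not principal. -/
theorem stmt_12 (k : Type*) [Field k] :
    let P := MvPowerSeries (Fin 4) k
    let I : Ideal P := Ideal.span
      {(MvPowerSeries.X 0 : P) * MvPowerSeries.X 1 -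
        (MvPowerSeries.X 2 : P) * MvPowerSeries.X 3}
    let R := P ⧸ I
    let x : R := Ideal.Quotient.mk I (MvPowerSeries.X 0)
    let y : R := Ideal.Quotient.mk I (MvPowerSeries.X 1)
    let z : R := Ideal.Quotient.mk I (MvPowerSeries.X 2)
    let A : Matrix (Fin 2) (Fin 2) R := !![x, 0; 0, z]
    annCoker A = Ideal.span {x} ⊓ Ideal.span {z} ∧
      Ideal.span {x} ⊓ Ideal.span {z} = Ideal.span {x * z, x * y} ∧
      ¬ (annCoker A).IsPrincipal := by
  intro P I R x y z A
  have hinf : Ideal.span {x} ⊓ Ideal.span {z} = Ideal.span {x * z, x * y} :=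
    span_inf_span_eq_span_pair_of_ker_eq (Ideal.Quotient.mk I) Ideal.Quotient.mk_surjective
      Ideal.mk_ker (MvPowerSeries.X_prime 0) (MvPowerSeries.not_X_dvd_X (by decide))
  let ψ : P →+* MvPowerSeries (Fin 2) k := (MvPowerSeries.rename ![0, 1, 0, 1]).toRingHom
  have hψ (i : Fin 4) : ψ (MvPowerSeries.X i) = MvPowerSeries.X (![0, 1, 0, 1] i) :=
    MvPowerSeries.rename_X _ i
  let φ : R →+* MvPowerSeries (Fin 2) k := Ideal.Quotient.lift I ψ fun a ha => by
    obtain ⟨c, rfl⟩ := Ideal.mem_span_singleton'.mp ha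
    rw [map_mul, map_sub, map_mul, map_mul, hψ, hψ, hψ, hψ]
    simp
  have hφ (i : Fin 4) : φ (Ideal.Quotient.mk I (MvPowerSeries.X i)) =
      MvPowerSeries.X (![0, 1, 0, 1] i) :=
    (Ideal.Quotient.lift_mk _ _ _).trans (hψ i)
  refine ⟨annCoker_diagonal_two x z, hinf, ?_⟩
  rw [annCoker_diagonal_two, hinf]
  exact not_isPrincipal_span_mul_pair_of_ringHom φ (by decide) (hφ 0) (hφ 1) (hφ 2)
end

section
/- Let φ: E → F be a map of finite free R-modules with rank(F) = m, and for 1 ≤ j ≤ m define φ_j : E ⊗ Λ^{j−1}F → Λ^j F by a ⊗ w ↦ φ(a) ∧ w, and Ann.Coker_j(φ) := Ann(coker φ_{m+1−j}). Then Ann.Coker_j(φ) = Ann(Λ^{m+1−j} coker(φ)); in particular it depends only on the module coker(φ). -/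
open TensorProduct

/-- The map `φ_{j+1} : E ⊗ Λ^j F → Λ^{j+1} F`, `a ⊗ w ↦ φ(a) ∧ w`. -/
noncomputable def wedgeMap {R : Type*} [CommRing R] {E F : Type*}
    [AddCommGroup E] [Module R E] [AddCommGroup F] [Module R F]
    (φ : E →ₗ[R] F) (j : ℕ) :
    TensorProduct R E (⋀[R]^j F) →ₗ[R] (⋀[R]^(j + 1) F) :=
  LinearMap.codRestrict (⋀[R]^(j + 1) F)
    (TensorProduct.lift
      (LinearMap.mk₂ R
        (fun a (w : ⋀[R]^j F) =>
          ExteriorAlgebra.ι R (φ a) * (w : ExteriorAlgebra R F))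
        (fun a b w => by simp [add_mul])
        (fun c a w => by simp [smul_mul_assoc])
        (fun a w₁ w₂ => by simp [mul_add])
        (fun c a w => by simp [mul_smul_comm])))
    (by
      intro x
      induction x using TensorProduct.induction_on with
      | zero => simpa using Submodule.zero_mem _
      | tmul a w =>
          simp only [TensorProduct.lift.tmul, LinearMap.mk₂_apply]
          show ExteriorAlgebra.ι R (φ a) * (w : ExteriorAlgebra R F) ∈
            LinearMap.range (ExteriorAlgebra.ι R : F →ₗ[R] ExteriorAlgebra R F) ^ (j + 1)
          rw [pow_succ']
          exact Submodule.mul_mem_mul (LinearMap.mem_range_self _ (φ a)) w.2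
      | add x y hx hy => simpa using Submodule.add_mem _ hx hy)

section Aux

open ExteriorAlgebra

variable {R : Type*} [CommRing R] {E F : Type*}
    [AddCommGroup E] [Module R E] [AddCommGroup F] [Module R F]

private lemma wedgeMap_tmul_coe (φ : E →ₗ[R] F) (k : ℕ) (a : E) (z : ⋀[R]^k F) :
    (wedgeMap φ k (a ⊗ₜ[R] z) : ExteriorAlgebra R F) = ι R (φ a) * (z : ExteriorAlgebra R F) :=
  rfl

/-- `ιMulti` with codomain restricted to the exterior power. -/
private noncomputable def iotaPow (k : ℕ) : F [⋀^Fin k]→ₗ[R] (⋀[R]^k F : Submodule R _) :=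
  (ιMulti R k).codRestrict _ (fun v => ιMulti_range R k ⟨v, rfl⟩)

private lemma iotaPow_coe (k : ℕ) (v : Fin k → F) :
    ((iotaPow k v : ⋀[R]^k F) : ExteriorAlgebra R F) = ιMulti R k v := rfl

/-- The alternating map `F^{k+1} → Λ^{k+1}F ⧸ W`. -/
private noncomputable def betaMap (φ : E →ₗ[R] F) (k : ℕ) :
    F [⋀^Fin (k + 1)]→ₗ[R] ((⋀[R]^(k + 1) F) ⧸ LinearMap.range (wedgeMap φ k)) :=
  (LinearMap.range (wedgeMap φ k)).mkQ.compAlternatingMap (iotaPow (k + 1))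

private lemma beta_vanish (φ : E →ₗ[R] F) (k : ℕ) (v : Fin (k + 1) → F) (i : Fin (k + 1))
    (hv : v i ∈ LinearMap.range φ) : betaMap φ k v = 0 := by
  obtain ⟨a, ha⟩ := hv
  have key : ∀ w : Fin (k + 1) → F, w 0 = φ a → betaMap φ k w = 0 := by
    intro w hw
    have hz : ιMulti R k (Matrix.vecTail w) ∈ ⋀[R]^k F := ιMulti_range R k ⟨_, rfl⟩
    have hmem : (iotaPow (k + 1) w : ⋀[R]^(k + 1) F) ∈ LinearMap.range (wedgeMap φ k) := by
      refine ⟨a ⊗ₜ ⟨_, hz⟩, ?_⟩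
      apply Subtype.ext
      rw [wedgeMap_tmul_coe, iotaPow_coe]
      rw [show (ιMulti R (k + 1) w : ExteriorAlgebra R F)
        = ι R (w 0) * ιMulti R k (Matrix.vecTail w) from ιMulti_succ_apply w, hw]
    show (LinearMap.range (wedgeMap φ k)).mkQ (iotaPow (k + 1) w) = 0
    rwa [Submodule.mkQ_apply, Submodule.Quotient.mk_eq_zero]
  by_cases h0 : i = 0
  · subst h0; exact key v ha.symm
  · have hswap := (betaMap φ k).map_swap (v := v) (Ne.symm h0 : (0 : Fin (k + 1)) ≠ i)
    have hzero : betaMap φ k (v ∘ Equiv.swap 0 i) = 0 := by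
      refine key _ ?_
      simp [Equiv.swap_apply_left, ← ha]
    rw [hswap] at hzero
    exact neg_eq_zero.mp hzero

private lemma beta_welldef (φ : E →ₗ[R] F) (k : ℕ) (u u' : Fin (k + 1) → F)
    (h : ∀ i, u i - u' i ∈ LinearMap.range φ) : betaMap φ k u = betaMap φ k u' := by
  classical
  have key : ∀ s : Finset (Fin (k + 1)),
      betaMap φ k (fun i => if i ∈ s then u' i else u i) = betaMap φ k u := by
    intro s
    induction s using Finset.induction_on with
    | empty => simp
    | @insert i s hi ih =>
      set v : Fin (k + 1) → F := fun j => if j ∈ s then u' j else u j with hv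
      have hupd : (fun j => if j ∈ insert i s then u' j else u j)
          = Function.update v i (u' i) := by
        funext j
        rcases eq_or_ne j i with rfl | hj
        · simp [hv, Function.update_self, hi]
        · simp [hv, Function.update_of_ne hj, Finset.mem_insert, hj]
      rw [hupd]
      have hsub := (betaMap φ k).map_update_sub v i (u i) (u i - u' i)
      rw [sub_sub_cancel] at hsub
      have hvi : Function.update v i (u i) = v := by
        have : v i = u i := by simp [hv, hi]
        rw [← this, Function.update_eq_self]
      have hzero : betaMap φ k (Function.update v i (u i - u' i)) = 0 := by
        refine beta_vanish φ k _ i ?_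
        rw [Function.update_self]
        exact h i
      rw [hsub, hvi, hzero, sub_zero, ih]
  have := key Finset.univ
  simpa using this.symm

private lemma beta_welldef' (φ : E →ₗ[R] F) (k : ℕ) (u u' : Fin (k + 1) → F)
    (h : ∀ i, (LinearMap.range φ).mkQ (u i) = (LinearMap.range φ).mkQ (u' i)) :
    betaMap φ k u = betaMap φ k u' := by
  refine beta_welldef φ k u u' fun i => ?_
  have := h i
  rw [Submodule.mkQ_apply, Submodule.mkQ_apply] at this
  exact (Submodule.Quotient.eq _).mp this

/-- A set-theoretic section of the quotient map. -/
private noncomputable def sig (N : Submodule R F) : (F ⧸ N) → F :=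
  Function.surjInv (Submodule.mkQ_surjective N)

private lemma sig_spec (N : Submodule R F) (q : F ⧸ N) : N.mkQ (sig N q) = q :=
  Function.surjInv_eq _ q

private lemma sig_update {n : ℕ} [DecidableEq (Fin n)] (N : Submodule R F) (v : Fin n → F ⧸ N) (i : Fin n)
    (x : F ⧸ N) :
    sig N ∘ Function.update v i x = Function.update (sig N ∘ v) i (sig N x) := by
  funext j
  rcases eq_or_ne j i with rfl | hj
  · simp
  · simp [Function.update_of_ne hj]

/-- The induced alternating map `(F⧸N)^{k+1} → Λ^{k+1}F ⧸ W`. -/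
private noncomputable def alphaMap (φ : E →ₗ[R] F) (k : ℕ) :
    (F ⧸ LinearMap.range φ) [⋀^Fin (k + 1)]→ₗ[R]
      ((⋀[R]^(k + 1) F) ⧸ LinearMap.range (wedgeMap φ k)) where
  toFun v := betaMap φ k (sig _ ∘ v)
  map_update_add' v i x y := by
    rw [sig_update, sig_update, sig_update]
    have h1 : betaMap φ k (Function.update (sig _ ∘ v) i (sig (LinearMap.range φ) (x + y)))
        = betaMap φ k (Function.update (sig _ ∘ v) i
            (sig (LinearMap.range φ) x + sig (LinearMap.range φ) y)) := by
      refine beta_welldef' φ k _ _ fun j => ?_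
      rcases eq_or_ne j i with rfl | hj
      · simp [← Submodule.mkQ_apply, sig_spec]
      · simp [Function.update_of_ne hj]
    rw [h1, AlternatingMap.map_update_add]
  map_update_smul' v i c x := by
    rw [sig_update, sig_update]
    have h1 : betaMap φ k (Function.update (sig _ ∘ v) i (sig (LinearMap.range φ) (c • x)))
        = betaMap φ k (Function.update (sig _ ∘ v) i (c • sig (LinearMap.range φ) x)) := by
      refine beta_welldef' φ k _ _ fun j => ?_
      rcases eq_or_ne j i with rfl | hj
      · simp [← Submodule.mkQ_apply, sig_spec]
      · simp [Function.update_of_ne hj]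
    rw [h1, AlternatingMap.map_update_smul]
  map_eq_zero_of_eq' v i j hv hij := by
    refine (betaMap φ k).map_eq_zero_of_eq (sig _ ∘ v) ?_ hij
    simp [Function.comp, hv]

private lemma alphaMap_factor (φ : E →ₗ[R] F) (k : ℕ) (u : Fin (k + 1) → F) :
    alphaMap φ k ((LinearMap.range φ).mkQ ∘ u) = betaMap φ k u := by
  show betaMap φ k (sig _ ∘ ((LinearMap.range φ).mkQ ∘ u)) = betaMap φ k u
  refine beta_welldef' φ k _ _ fun i => ?_
  simp [← Submodule.mkQ_apply, sig_spec]

private lemma g_compat (φ : E →ₗ[R] F) (k : ℕ) (y : (⋀[R]^(k + 1) F : Submodule R _)) :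
    liftAlternating (Pi.single (k + 1) (alphaMap φ k))
        (map (LinearMap.range φ).mkQ (y : ExteriorAlgebra R F)) =
      (LinearMap.range (wedgeMap φ k)).mkQ y := by
  obtain ⟨x, hx⟩ := y
  have hx' : x ∈ Submodule.span R (Set.range (ιMulti R (k + 1) (M := F))) := by
    rw [ιMulti_span_fixedDegree]; exact hx
  revert hx
  induction hx' using Submodule.span_induction with
  | mem x h =>
    intro hx
    obtain ⟨v, rfl⟩ := h
    rw [map_apply_ιMulti, liftAlternating_apply_ιMulti, Pi.single_eq_same]
    rw [show ((LinearMap.range φ).mkQ ∘ v : Fin (k + 1) → _) = (LinearMap.range φ).mkQ ∘ v from rfl]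
    rw [alphaMap_factor]
    show (LinearMap.range (wedgeMap φ k)).mkQ (iotaPow (k + 1) v) = _
    congr 1
  | zero =>
    intro hx
    have : (⟨0, hx⟩ : (⋀[R]^(k + 1) F : Submodule R _)) = 0 := rfl
    rw [this]
    simp
  | add x y hxs hys ihx ihy =>
    intro hxy
    have hxm : x ∈ ⋀[R]^(k + 1) F := by rw [← ιMulti_span_fixedDegree]; exact hxs
    have hym : y ∈ ⋀[R]^(k + 1) F := by rw [← ιMulti_span_fixedDegree]; exact hys
    have : (⟨x + y, hxy⟩ : (⋀[R]^(k + 1) F : Submodule R _)) = ⟨x, hxm⟩ + ⟨y, hym⟩ := rfl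
    rw [this]
    simp only [Submodule.coe_add, map_add]
    rw [ihx hxm, ihy hym]
  | smul c x hxs ihx =>
    intro hcx
    have hxm : x ∈ ⋀[R]^(k + 1) F := by rw [← ιMulti_span_fixedDegree]; exact hxs
    have : (⟨c • x, hcx⟩ : (⋀[R]^(k + 1) F : Submodule R _)) = c • ⟨x, hxm⟩ := rfl
    rw [this]
    simp only [Submodule.coe_smul, map_smul]
    rw [ihx hxm]

private lemma map_mkQ_wedge (φ : E →ₗ[R] F) (k : ℕ) (y : (⋀[R]^(k + 1) F : Submodule R _))
    (hy : y ∈ LinearMap.range (wedgeMap φ k)) :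
    map (LinearMap.range φ).mkQ (y : ExteriorAlgebra R F) = 0 := by
  obtain ⟨t, rfl⟩ := hy
  induction t using TensorProduct.induction_on with
  | zero => simp
  | tmul a z =>
    rw [wedgeMap_tmul_coe, map_mul, map_apply_ι]
    have h0 : (LinearMap.range φ).mkQ (φ a) = 0 := by
      rw [Submodule.mkQ_apply, Submodule.Quotient.mk_eq_zero]
      exact ⟨a, rfl⟩
    rw [h0, map_zero, zero_mul]
  | add s t hs ht =>
    rw [map_add, Submodule.coe_add, map_add, hs, ht, add_zero]

private lemma map_mem_pow (φ : E →ₗ[R] F) (k : ℕ) (z : ExteriorAlgebra R F)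
    (hz : z ∈ ⋀[R]^(k + 1) F) :
    map (LinearMap.range φ).mkQ z ∈ ⋀[R]^(k + 1) (F ⧸ LinearMap.range φ) := by
  rw [← ιMulti_span_fixedDegree] at hz
  induction hz using Submodule.span_induction with
  | mem x h =>
    obtain ⟨v, rfl⟩ := h
    rw [map_apply_ιMulti]
    exact ιMulti_range R _ ⟨_, rfl⟩
  | zero => rw [map_zero]; exact Submodule.zero_mem _
  | add x y _ _ ihx ihy => rw [map_add]; exact Submodule.add_mem _ ihx ihy
  | smul c x _ ihx => rw [map_smul]; exact Submodule.smul_mem _ _ ihx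

private lemma surj_pow (φ : E →ₗ[R] F) (k : ℕ)
    (q : ExteriorAlgebra R (F ⧸ LinearMap.range φ))
    (hq : q ∈ ⋀[R]^(k + 1) (F ⧸ LinearMap.range φ)) :
    ∃ x, ∃ hx : x ∈ ⋀[R]^(k + 1) F, map (LinearMap.range φ).mkQ x = q := by
  rw [← ιMulti_span_fixedDegree] at hq
  induction hq using Submodule.span_induction with
  | mem q h =>
    obtain ⟨v, rfl⟩ := h
    refine ⟨ιMulti R (k + 1) (sig _ ∘ v), ιMulti_range R _ ⟨_, rfl⟩, ?_⟩
    rw [map_apply_ιMulti]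
    congr 1
    funext j
    exact sig_spec _ _
  | zero => exact ⟨0, Submodule.zero_mem _, map_zero _⟩
  | add x y _ _ ihx ihy =>
    obtain ⟨x', hx', hxe⟩ := ihx
    obtain ⟨y', hy', hye⟩ := ihy
    exact ⟨x' + y', Submodule.add_mem _ hx' hy', by rw [map_add, hxe, hye]⟩
  | smul c x _ ihx =>
    obtain ⟨x', hx', hxe⟩ := ihx
    exact ⟨c • x', Submodule.smul_mem _ _ hx', by rw [map_smul, hxe]⟩

private theorem aux_ann (φ : E →ₗ[R] F) (k : ℕ) :
    Module.annihilator R ((⋀[R]^(k + 1) F) ⧸ LinearMap.range (wedgeMap φ k)) =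
      Module.annihilator R (⋀[R]^(k + 1) (F ⧸ LinearMap.range φ)) := by
  ext r
  simp only [Module.mem_annihilator]
  constructor
  · intro h q
    obtain ⟨x, hx, hmap⟩ := surj_pow φ k q.1 q.2
    have h1 := h (Submodule.Quotient.mk ⟨x, hx⟩)
    rw [← Submodule.Quotient.mk_smul, Submodule.Quotient.mk_eq_zero] at h1
    have h2 := map_mkQ_wedge φ k _ h1
    apply Subtype.ext
    show r • (q : ExteriorAlgebra R (F ⧸ LinearMap.range φ)) = 0
    calc r • (q : ExteriorAlgebra R (F ⧸ LinearMap.range φ))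
        = r • map (LinearMap.range φ).mkQ x := by rw [hmap]
      _ = map (LinearMap.range φ).mkQ (r • x) := (map_smul _ _ _).symm
      _ = 0 := h2
  · intro h y
    obtain ⟨z, rfl⟩ := Submodule.mkQ_surjective _ y
    have hmem := map_mem_pow φ k (z : ExteriorAlgebra R F) z.2
    have h1 := h ⟨_, hmem⟩
    have h2 : map (LinearMap.range φ).mkQ
        ((r • z : (⋀[R]^(k + 1) F : Submodule R _)) : ExteriorAlgebra R F) = 0 := by
      rw [Submodule.coe_smul, map_smul]
      exact congrArg Subtype.val h1
    calc r • (LinearMap.range (wedgeMap φ k)).mkQ z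
        = (LinearMap.range (wedgeMap φ k)).mkQ (r • z) := (map_smul _ _ _).symm
      _ = liftAlternating (Pi.single (k + 1) (alphaMap φ k))
            (map (LinearMap.range φ).mkQ ((r • z : (⋀[R]^(k + 1) F : Submodule R _)) :
              ExteriorAlgebra R F)) := (g_compat φ k (r • z)).symm
      _ = 0 := by rw [h2, map_zero]

end Aux

/-- For `φ : E → F` between finite free modules with `rank F = m`,
and `1 ≤ j ≤ m`, the annihilator of the cokernel of
`φ_{m+1-j} : E ⊗ Λ^{m-j} F → Λ^{m+1-j} F` equals the annihilator of
`Λ^{m+1-j}(coker φ)`; in particular it depends only on `coker φ`. -/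
theorem stmt_13 {R : Type*} [CommRing R] {E F : Type*}
    [AddCommGroup E] [Module R E] [AddCommGroup F] [Module R F]
    [Module.Free R E] [Module.Finite R E] [Module.Free R F] [Module.Finite R F]
    {m : ℕ} (hm : Module.finrank R F = m) (φ : E →ₗ[R] F)
    (j : ℕ) (h1 : 1 ≤ j) (hj : j ≤ m) :
    Module.annihilator R
        ((⋀[R]^(m - j + 1) F) ⧸ LinearMap.range (wedgeMap φ (m - j))) =
      Module.annihilator R (⋀[R]^(m + 1 - j) (F ⧸ LinearMap.range φ)) := by
  rw [show m + 1 - j = m - j + 1 from by omega]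
  exact aux_ann φ (m - j)
end

section
/- Let A = diag(λ_1, …, λ_m) ∈ Mat_{m×m}(R) with divisibility (λ_1) ⊇ (λ_2) ⊇ ⋯ ⊇ (λ_m). Then the j-th annihilator ideal of the cokernel satisfies Ann.Coker_j(A) := Ann(Λ^{m+1−j} coker A) = (λ_j) for each 1 ≤ j ≤ m. -/
open ExteriorAlgebra

set_option maxHeartbeats 1000000 in
set_option synthInstance.maxHeartbeats 100000 in
/-- For `A = diag(λ₁, …, λ_m)` with `(λ₁) ⊇ (λ₂) ⊇ ⋯ ⊇ (λ_m)`,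
the `j`-th annihilator ideal `Ann.Coker_j(A) = Ann(Λ^{m+1-j} coker A)` equals `(λ_j)`
(for the `1`-based index `j = (j₀ : Fin m) + 1`, so the exterior power exponent is
`m + 1 - (j₀ + 1) = m - j₀`). -/
theorem stmt_15 {R : Type*} [CommRing R] {m : ℕ} (lam : Fin m → R)
    (hdiv : ∀ i j : Fin m, i ≤ j → lam i ∣ lam j) (j : Fin m) :
    Module.annihilator R
        (⋀[R]^(m - (j : ℕ))
          ((Fin m → R) ⧸ LinearMap.range (Matrix.diagonal lam).mulVecLin)) =
      Ideal.span {lam j} := by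
  classical
  set N := LinearMap.range (Matrix.diagonal lam).mulVecLin with hN
  set k := m - (j : ℕ) with hk
  set I := Ideal.span {lam j} with hI
  have hjm : (j : ℕ) < m := j.isLt
  have hNsingle : ∀ (i : Fin m) (c : R), (Pi.single i (lam i * c) : Fin m → R) ∈ N := by
    intro i c
    refine ⟨Pi.single i c, ?_⟩
    ext x
    rcases eq_or_ne x i with h | h
    · subst h; simp [Matrix.mulVecLin_apply, Matrix.mulVec_diagonal]
    · simp [Matrix.mulVecLin_apply, Matrix.mulVec_diagonal, Pi.single_eq_of_ne h]
  apply le_antisymm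
  · -- Ann ≤ (lam j)
    intro r hr
    rw [Module.mem_annihilator] at hr
    have hem : ∀ t : Fin k, (j : ℕ) + (t : ℕ) < m := by
      intro t; have := t.isLt; omega
    set em : Fin k → Fin m := fun t => ⟨(j : ℕ) + t, hem t⟩ with hem'
    have hinj : Function.Injective em := by
      intro a b hab
      have : (j : ℕ) + (a : ℕ) = (j : ℕ) + (b : ℕ) := congrArg Fin.val hab
      exact Fin.ext (by omega)
    set q : (Fin m → R) →ₗ[R] (Fin k → R ⧸ I) :=
      LinearMap.pi (fun t => (Submodule.mkQ I).comp (LinearMap.proj (em t))) with hq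
    have hker : N ≤ LinearMap.ker q := by
      rintro _ ⟨v, rfl⟩
      rw [LinearMap.mem_ker]
      funext t
      have hdvd : lam j ∣ lam (em t) * v (em t) := by
        refine dvd_mul_of_dvd_left (hdiv j (em t) ?_) _
        exact Fin.le_def.mpr (by simp [hem'])
      simp only [hq, LinearMap.pi_apply, LinearMap.comp_apply, LinearMap.proj_apply,
        Submodule.mkQ_apply, Matrix.mulVecLin_apply, Matrix.mulVec_diagonal, Pi.zero_apply]
      rw [Submodule.Quotient.mk_eq_zero]
      exact Ideal.mem_span_singleton.mpr hdvd
    set qbar : ((Fin m → R) ⧸ N) →ₗ[R] (Fin k → R ⧸ I) := Submodule.liftQ N q hker with hqbar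
    set dS : (Fin k → R ⧸ I) [⋀^Fin k]→ₗ[R ⧸ I] (R ⧸ I) := Matrix.detRowAlternating with hdS
    set dR : (Fin k → R ⧸ I) [⋀^Fin k]→ₗ[R] (R ⧸ I) :=
      { dS.toMultilinearMap.restrictScalars R with
        map_eq_zero_of_eq' := fun v i j h hij => dS.map_eq_zero_of_eq v h hij } with hdR
    set G : ((Fin m → R) ⧸ N) [⋀^Fin k]→ₗ[R] (R ⧸ I) := dR.compLinearMap qbar with hG
    set D : ExteriorAlgebra R ((Fin m → R) ⧸ N) →ₗ[R] R ⧸ I :=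
      liftAlternating
        (Function.update (fun i => (0 : ((Fin m → R) ⧸ N) [⋀^Fin i]→ₗ[R] (R ⧸ I))) k G)
      with hD
    set vv : Fin k → ((Fin m → R) ⧸ N) :=
      fun t => Submodule.Quotient.mk (Pi.single (em t) 1 : Fin m → R) with hvv
    have hmem : ιMulti R k vv ∈ ⋀[R]^k ((Fin m → R) ⧸ N) := ιMulti_range R k ⟨vv, rfl⟩
    have h0 : r • (⟨ιMulti R k vv, hmem⟩ : ⋀[R]^k ((Fin m → R) ⧸ N)) = 0 := hr _
    have h0' : r • ιMulti R k vv = 0 := congrArg Subtype.val h0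
    have h1 : D (r • ιMulti R k vv) = 0 := by rw [h0', map_zero]
    rw [map_smul, liftAlternating_apply_ιMulti, Function.update_self] at h1
    have hmat : (Matrix.of fun t t' => qbar (vv t) t') = (1 : Matrix (Fin k) (Fin k) (R ⧸ I)) := by
      ext t t'
      show q (Pi.single (em t) (1 : R)) t' = _
      simp only [hq, LinearMap.pi_apply, LinearMap.comp_apply, LinearMap.proj_apply,
        Submodule.mkQ_apply]
      rcases eq_or_ne t' t with h | h
      · subst h; simp [Matrix.one_apply_eq]
      · rw [Pi.single_eq_of_ne (fun hc => h (hinj hc)), Matrix.one_apply_ne' h]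
        simp
    have hGvv : G vv = 1 := by
      have h2 : G vv = Matrix.det (Matrix.of fun t t' => qbar (vv t) t') := rfl
      rw [h2, hmat, Matrix.det_one]
    rw [hGvv] at h1
    have h2 : (Submodule.Quotient.mk r : R ⧸ I) = 0 := by
      have h3 : r • (1 : R ⧸ I) = (Submodule.Quotient.mk r : R ⧸ I) := by
        rw [show (1 : R ⧸ I) = Submodule.Quotient.mk (1 : R) from rfl,
          ← Submodule.Quotient.mk_smul, smul_eq_mul, mul_one]
      rwa [h3] at h1
    exact (Submodule.Quotient.mk_eq_zero I).mp h2
  · -- (lam j) ≤ Ann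
    rw [Ideal.span_le, Set.singleton_subset_iff, SetLike.mem_coe, Module.mem_annihilator]
    have base : ∀ v : Fin k → ((Fin m → R) ⧸ N), lam j • ιMulti R k v = 0 := by
      intro v
      choose w hw using fun s => Submodule.Quotient.mk_surjective N (v s)
      set f := (ιMulti R k (M := (Fin m → R) ⧸ N)).toMultilinearMap with hf
      have hv : v = fun s =>
          ∑ i : Fin m, w s i •
            (Submodule.Quotient.mk (Pi.single i 1 : Fin m → R) : (Fin m → R) ⧸ N) := by
        funext s
        rw [← hw s]
        have h4 : w s = ∑ i : Fin m, w s i • (Pi.single i (1 : R) : Fin m → R) := by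
          conv_lhs => rw [← Finset.univ_sum_single (w s)]
          refine Finset.sum_congr rfl fun i _ => ?_
          ext x
          rcases eq_or_ne x i with h | h
          · subst h; simp
          · simp [Pi.single_eq_of_ne h]
        conv_lhs => rw [h4]
        rw [← Submodule.mkQ_apply, map_sum]
        simp only [map_smul, Submodule.mkQ_apply]
      have expand : f v = ∑ g : Fin k → Fin m, (∏ s, w s (g s)) •
          f (fun s => Submodule.Quotient.mk (Pi.single (g s) 1 : Fin m → R)) := by
        rw [hv, MultilinearMap.map_sum]
        refine Finset.sum_congr rfl fun g _ => ?_
        exact MultilinearMap.map_smul_univ _ _ _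
      show lam j • f v = 0
      rw [expand, Finset.smul_sum]
      refine Finset.sum_eq_zero fun g _ => ?_
      rw [smul_comm]
      by_cases hg : ∃ s, g s ≤ j
      · obtain ⟨s, hs⟩ := hg
        set vv : Fin k → ((Fin m → R) ⧸ N) :=
          fun s => Submodule.Quotient.mk (Pi.single (g s) 1 : Fin m → R) with hvv
        obtain ⟨c, hc⟩ := hdiv (g s) j hs
        have h0 : lam j • vv s = 0 := by
          rw [hvv]
          show lam j •
            (Submodule.Quotient.mk (Pi.single (g s) 1 : Fin m → R) : (Fin m → R) ⧸ N) = 0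
          rw [← Submodule.Quotient.mk_smul, Submodule.Quotient.mk_eq_zero]
          have h5 : lam j • (Pi.single (g s) (1 : R) : Fin m → R) =
              (Pi.single (g s) (lam (g s) * c) : Fin m → R) := by
            ext x
            rcases eq_or_ne x (g s) with h | h
            · subst h; simp [hc]
            · simp [Pi.single_eq_of_ne h]
          rw [h5]
          exact hNsingle _ _
        have h6 : lam j • f vv = 0 := by
          calc lam j • f vv
              = lam j • f (Function.update vv s (vv s)) := by
                rw [Function.update_eq_self]
            _ = f (Function.update vv s (lam j • vv s)) :=
                (f.map_update_smul vv s (lam j) (vv s)).symm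
            _ = f (Function.update vv s 0) := by rw [h0]
            _ = 0 := f.map_update_zero vv s
        rw [h6, smul_zero]
      · push_neg at hg
        have hne : ∃ s t : Fin k, s ≠ t ∧ g s = g t := by
          have hmaps : ∀ s : Fin k, s ∈ Finset.univ → g s ∈ Finset.Ioi j :=
            fun s _ => Finset.mem_Ioi.mpr (hg s)
          have hcard : (Finset.Ioi j).card < (Finset.univ : Finset (Fin k)).card := by
            rw [Fin.card_Ioi, Finset.card_univ, Fintype.card_fin]
            omega
          obtain ⟨s, _, t, _, hst, h⟩ :=
            Finset.exists_ne_map_eq_of_card_lt_of_maps_to hcard hmaps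
          exact ⟨s, t, hst, h⟩
        obtain ⟨s, t, hst, hgst⟩ := hne
        have h7 : ιMulti R k (fun s => (Submodule.Quotient.mk (Pi.single (g s) 1 : Fin m → R) :
            (Fin m → R) ⧸ N)) = 0 :=
          AlternatingMap.map_eq_zero_of_eq _ _ (by rw [hgst]) hst
        have h7' : f (fun s => (Submodule.Quotient.mk (Pi.single (g s) 1 : Fin m → R) :
            (Fin m → R) ⧸ N)) = 0 := h7
        rw [h7', smul_zero, smul_zero]
    have key : ∀ a ∈ Submodule.span R
        (Set.range (ιMulti R k (M := (Fin m → R) ⧸ N))), lam j • a = 0 := by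
      intro a ha
      induction ha using Submodule.span_induction with
      | mem a ha => obtain ⟨v, rfl⟩ := ha; exact base v
      | zero => simp
      | add a b _ _ hxa hxb => rw [smul_add, hxa, hxb, add_zero]
      | smul c a _ hxa => rw [smul_comm, hxa, smul_zero]
    intro x
    have hx : (x : ExteriorAlgebra R ((Fin m → R) ⧸ N)) ∈ Submodule.span R
        (Set.range (ιMulti R k (M := (Fin m → R) ⧸ N))) := by
      rw [ιMulti_span_fixedDegree R k]; exact x.2
    exact Subtype.ext (key x.1 hx)
end

section
/- Let R = k[[x,y,z]]/(xy) and J = (z). Then, using Der_k(R) = R⟨x∂_x, y∂_y, ∂_z⟩, the essential singular locus satisfies Sing_1(J) = R, while the classical singular ideal Fitt_1(Ω^1_{R/J}) = (x, y, z) ⊊ R; thus for non-regular ambient rings the essential singular locus can be strictly larger than the Fitting-ideal singular locus. -/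
/-!
The derivation `∂/∂z` of `k[[x,y,z]]` kills `xy`, hence preserves `(xy)` and descends to a
`k`-derivation of `R` sending `z` to `1`; so `Sing_1(J) = R`.

The entries `y, x` of the single relation of `Ω` are `1 × 1` minors, hence lie in `Fitt_1`.
Conversely the relation vanishes modulo the maximal ideal `𝔪 = (x, y, z)` (the kernel of the
constant coefficient), so `Ω` surjects onto `k²`. For any presentation `S^n ↠ Ω` the relations then
reduce mod `𝔪` to vectors in an `(n - 2)`-dimensional kernel, so every `(n - 1)`-minor vanishes
mod `𝔪`.
-/

set_option synthInstance.maxHeartbeats 1000000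
set_option maxHeartbeats 1000000

/-- The `i`-th Fitting ideal of a module `M`: the ideal generated by the
`(n−i) × (n−i)` minors of relation matrices, over all finite presentations
`π : R^n ↠ M` (independent of the presentation for finitely generated modules). -/
def fittingIdeal (R : Type*) [CommRing R] (M : Type*) [AddCommGroup M] [Module R M]
    (i : ℕ) : Ideal R :=
  ⨆ (n : ℕ) (π : (Fin n → R) →ₗ[R] M) (_ : Function.Surjective π),
    Ideal.span { x | ∃ v : Fin (n - i) → Fin n → R,
      (∀ l, π (v l) = 0) ∧
        ∃ r : Fin (n - i) → Fin n,
          x = (Matrix.of fun a b : Fin (n - i) => v a (r b)).det }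

namespace MvPowerSeries

variable {σ R : Type*}

theorem ker_constantCoeff [CommRing R] [Finite σ] :
    RingHom.ker (constantCoeff : MvPowerSeries σ R →+* R) = Ideal.span (Set.range X) := by
  classical
  refine le_antisymm (fun f hf => ?_) (Ideal.span_le.2 ?_)
  · have := Fintype.ofFinite σ
    obtain ⟨n, ⟨e⟩⟩ := Finite.exists_equiv_fin σ
    let : LinearOrder σ := LinearOrder.lift' e e.injective
    -- split `f` according to the least variable occurring in each monomial
    let part (i : σ) : MvPowerSeries σ R := fun d => if d.support.min = i then coeff d f else 0
    have coeff_part (i : σ) (d : σ →₀ ℕ) :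
        coeff d (part i) = if d.support.min = i then coeff d f else 0 := rfl
    have hpart : ∀ i, X i ∣ part i := fun i => X_dvd_iff.2 fun d hd => by
      have : d.support.min ≠ i := fun h => Finsupp.mem_support_iff.1 (Finset.mem_of_min h) hd
      rw [coeff_part, if_neg this]
    have hsum : f = ∑ i, part i := by
      ext d
      simp only [map_sum, coeff_part]
      rcases d.support.eq_empty_or_nonempty with hd | hd
      · rw [hd, Finsupp.support_eq_empty.1 hd, coeff_zero_eq_constantCoeff_apply,
          RingHom.mem_ker.1 hf]
        simp
      · obtain ⟨m, hm⟩ := Finset.min_of_nonempty hd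
        simp [hm]
    rw [hsum]
    exact Ideal.sum_mem _ fun i _ => Ideal.mem_of_dvd _ (hpart i) (Ideal.subset_span ⟨i, rfl⟩)
  · rintro _ ⟨i, rfl⟩
    exact constantCoeff_X i

theorem pderiv_mem_span_singleton [CommSemiring R] {i : σ} {g : MvPowerSeries σ R}
    (hg : pderiv R i g = 0) {f : MvPowerSeries σ R} (hf : f ∈ Ideal.span {g}) :
    pderiv R i f ∈ Ideal.span {g} := by
  obtain ⟨c, rfl⟩ := Ideal.mem_span_singleton'.1 hf
  rw [Derivation.leibniz, hg, smul_zero, zero_add, smul_eq_mul]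
  exact Ideal.mul_mem_right _ _ (Ideal.mem_span_singleton_self g)

theorem exists_derivation_quotient_X_eq_one [CommRing R] (I : Ideal (MvPowerSeries σ R)) (i : σ)
    (hI : ∀ f ∈ I, pderiv R i f ∈ I) :
    ∃ D : Derivation R (MvPowerSeries σ R ⧸ I) (MvPowerSeries σ R ⧸ I),
      D (Ideal.Quotient.mk I (X i)) = 1 := by
  have hd : ∀ f, Ideal.Quotient.mkₐ R I f = 0 → Ideal.Quotient.mkₐ R I (pderiv R i f) = 0 := by
    simpa [Ideal.Quotient.eq_zero_iff_mem] using hI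
  refine ⟨Derivation.liftOfSurjective (Ideal.Quotient.mkₐ_surjective R I) hd, ?_⟩
  rw [← Ideal.Quotient.mkₐ_eq_mk R, Derivation.liftOfSurjective_apply, pderiv_X_self, map_one]

end MvPowerSeries

section FittingIdeal

variable {S : Type*} [CommRing S]

theorem det_mem_fittingIdeal {M : Type*} [AddCommGroup M] [Module S M] {n i : ℕ}
    (π : (Fin n → S) →ₗ[S] M) (hπ : Function.Surjective π) (v : Fin (n - i) → Fin n → S)
    (hv : ∀ l, π (v l) = 0) (r : Fin (n - i) → Fin n) :
    (Matrix.of fun a b => v a (r b)).det ∈ fittingIdeal S M i :=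
  Submodule.mem_iSup_of_mem n <| Submodule.mem_iSup_of_mem π <|
    Submodule.mem_iSup_of_mem hπ <| Ideal.subset_span ⟨v, hv, r, rfl⟩

-- The rows `u` lie in a kernel of dimension `n - m < p`, so they are linearly dependent.
theorem det_eq_zero_of_forall_mem_ker {K : Type*} [Field K] {n m p : ℕ}
    (T : (Fin n → K) →ₗ[K] (Fin m → K)) (hT : Function.Surjective T) (hp : n < p + m)
    (u : Fin p → Fin n → K) (hu : ∀ l, T (u l) = 0) (r : Fin p → Fin n) :
    (Matrix.of fun a b => u a (r b)).det = 0 := by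
  by_contra hdet
  have hli : LinearIndependent K u := LinearIndependent.of_comp (LinearMap.funLeft K K r)
    (Matrix.linearIndependent_rows_of_det_ne_zero hdet)
  let uker : Fin p → LinearMap.ker T := fun l => ⟨u l, hu l⟩
  have hliker : LinearIndependent K uker :=
    LinearIndependent.of_comp (LinearMap.ker T).subtype (by exact hli)
  have hcard : p ≤ Module.finrank K (LinearMap.ker T) := by
    simpa using hliker.fintype_card_le_finrank
  have hrank := T.finrank_range_add_finrank_ker
  rw [LinearMap.range_eq_top.2 hT, finrank_top] at hrank
  simp only [Module.finrank_fin_fun] at hrank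
  omega

theorem fittingIdeal_le_ker_algebraMap {K M : Type*} [Field K] [Algebra S K] [AddCommGroup M]
    [Module S M] {m i : ℕ} (Φ : M →ₗ[S] (Fin m → K)) (hΦ : Function.Surjective Φ) (hi : i < m) :
    fittingIdeal S M i ≤ RingHom.ker (algebraMap S K) := by
  refine iSup_le fun n => iSup_le fun π => iSup_le fun hπ => Ideal.span_le.2 ?_
  rintro _ ⟨v, hv, r, rfl⟩
  let ψ := Φ ∘ₗ π
  let T := Fintype.linearCombination K fun j => ψ (Pi.single j 1)
  -- `ψ` is `S`-linear with values in a `K`-vector space, so it factors through `K^n`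
  have hψ : ∀ s, T (algebraMap S K ∘ s) = ψ s := fun s => by
    conv_rhs => rw [← Finset.univ_sum_single s]
    rw [Fintype.linearCombination_apply, map_sum]
    refine Finset.sum_congr rfl fun j _ => ?_
    rw [Function.comp_apply, algebraMap_smul, ← map_smul, ← Pi.single_smul', smul_eq_mul, mul_one]
  have hT : Function.Surjective T := fun c => by
    obtain ⟨o, rfl⟩ := hΦ c
    obtain ⟨q, rfl⟩ := hπ o
    exact ⟨_, hψ q⟩
  rw [SetLike.mem_coe, RingHom.mem_ker, RingHom.map_det]
  refine det_eq_zero_of_forall_mem_ker T hT (by omega) (fun l => algebraMap S K ∘ v l)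
    (fun l => by rw [hψ]; simp [ψ, hv l]) r

theorem fittingIdeal_quotient_span_singleton_le_ker {K : Type*} [Field K] (ε : S →+* K)
    (hε : Function.Surjective ε) {n i : ℕ} (w : Fin n → S) (hw : ∀ j, ε (w j) = 0)
    (hi : i < n) :
    fittingIdeal S ((Fin n → S) ⧸ Submodule.span S {w}) i ≤ RingHom.ker ε := by
  let _ : Algebra S K := ε.toAlgebra
  have hN : Submodule.span S {w} ≤ LinearMap.ker ((Algebra.linearMap S K).compLeft (Fin n)) :=
    Submodule.span_le.2 <| Set.singleton_subset_iff.2 <| funext hw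
  refine fittingIdeal_le_ker_algebraMap (Submodule.liftQ _ _ hN) (fun c => ?_) hi
  choose s hs using fun j => hε (c j)
  exact ⟨Submodule.mkQ _ s, funext hs⟩

theorem apply_mem_fittingIdeal_one_quotient_span_singleton (w : Fin 2 → S) (j : Fin 2) :
    w j ∈ fittingIdeal S ((Fin 2 → S) ⧸ Submodule.span S {w}) 1 := by
  have hw : (Submodule.span S {w}).mkQ w = 0 :=
    (Submodule.Quotient.mk_eq_zero _).2 (Submodule.mem_span_singleton_self w)
  have := det_mem_fittingIdeal (i := 1) _ (Submodule.mkQ_surjective _) (fun _ => w) (fun _ => hw)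
    fun _ => j
  rwa [Matrix.det_fin_one] at this

end FittingIdeal

theorem stmt_18_general (k : Type*) [Field k] :
    let P := MvPowerSeries (Fin 3) k
    let I : Ideal P := Ideal.span {(MvPowerSeries.X 0 : P) * MvPowerSeries.X 1}
    let R := P ⧸ I
    let x : R := Ideal.Quotient.mk I (MvPowerSeries.X 0)
    let y : R := Ideal.Quotient.mk I (MvPowerSeries.X 1)
    let z : R := Ideal.Quotient.mk I (MvPowerSeries.X 2)
    let J : Ideal R := Ideal.span {z}
    let Sing1 : Ideal R := J ⊔ Ideal.span {r : R | ∃ D : Derivation k R R, r = D z}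
    let S := R ⧸ J
    let Ω := (Fin 2 → S) ⧸ Submodule.span S
      ({![Ideal.Quotient.mk J y, Ideal.Quotient.mk J x]} : Set (Fin 2 → S))
    Sing1 = ⊤ ∧
      Ideal.comap (Ideal.Quotient.mk J) (fittingIdeal S Ω 1) = Ideal.span {x, y, z} ∧
      Ideal.span {x, y, z} ≠ (⊤ : Ideal R) := by
  intro P I R x y z J Sing1 S Ω
  have hI : I ≤ RingHom.ker (MvPowerSeries.constantCoeff : P →+* k) :=
    Ideal.span_le.2 <| Set.singleton_subset_iff.2 <| by
      rw [SetLike.mem_coe, RingHom.mem_ker, map_mul, MvPowerSeries.constantCoeff_X, zero_mul]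
  let χ : R →+* k := Ideal.Quotient.lift I MvPowerSeries.constantCoeff hI
  have hχ : RingHom.ker χ = Ideal.span {x, y, z} := by
    rw [Ideal.ker_quotient_lift, MvPowerSeries.ker_constantCoeff, Ideal.map_span, ← Set.range_comp]
    congr 1
    ext
    simp [Fin.exists_fin_succ, eq_comm, x, y, z]
  have hJ : J ≤ RingHom.ker χ := hχ ▸ Ideal.span_mono (by simp)
  let ε : S →+* k := Ideal.Quotient.lift J χ hJ
  refine ⟨?_, le_antisymm ?_ ?_, hχ ▸ RingHom.ker_ne_top χ⟩
  · obtain ⟨D, hD⟩ := MvPowerSeries.exists_derivation_quotient_X_eq_one I 2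
      fun f => MvPowerSeries.pderiv_mem_span_singleton (by simp [MvPowerSeries.pderiv_X_of_ne])
    exact (Ideal.eq_top_iff_one _).2 (Ideal.mem_sup_right (Ideal.subset_span ⟨D, hD.symm⟩))
  · have hε : Function.Surjective ε := fun c =>
      ⟨Ideal.Quotient.mk J (Ideal.Quotient.mk I (MvPowerSeries.C c)),
        MvPowerSeries.constantCoeff_C (σ := Fin 3) c⟩
    have hΩ : fittingIdeal S Ω 1 ≤ RingHom.ker ε := by
      refine fittingIdeal_quotient_span_singleton_le_ker (S := S) ε hε _ (fun j => ?_) one_lt_two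
      fin_cases j <;> exact MvPowerSeries.constantCoeff_X _
    calc Ideal.comap (Ideal.Quotient.mk J) (fittingIdeal S Ω 1)
        ≤ Ideal.comap (Ideal.Quotient.mk J) (RingHom.ker ε) := Ideal.comap_mono hΩ
      _ = Ideal.span {x, y, z} := (RingHom.comap_ker _ _).trans hχ
  · have hz : Ideal.Quotient.mk J z = 0 :=
      Ideal.Quotient.eq_zero_iff_mem.2 (Ideal.mem_span_singleton_self z)
    rw [Ideal.span_le, Set.insert_subset_iff, Set.insert_subset_iff, Set.singleton_subset_iff]
    refine ⟨?_, ?_, ?_⟩ <;> rw [SetLike.mem_coe, Ideal.mem_comap]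
    · exact apply_mem_fittingIdeal_one_quotient_span_singleton
        ![Ideal.Quotient.mk J y, Ideal.Quotient.mk J x] 1
    · exact apply_mem_fittingIdeal_one_quotient_span_singleton
        ![Ideal.Quotient.mk J y, Ideal.Quotient.mk J x] 0
    · exact hz ▸ zero_mem _

/-- Let `R = k[[x,y,z]]/(xy)` and `J = (z)`.  Then the essential
singular locus `Sing_1(J) = J + Der_k(R)(z) = R`, while the classical singular ideal
`Fitt_1(Ω¹_{R/J})` (computed from the presentation
`Ω¹_{R/J} = (R/J)² / ⟨x dy + y dx⟩` in coordinates `dx, dy`) pulls back to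
`(x, y, z) ⊊ R`. -/
theorem stmt_18 (k : Type*) [Field k] [CharZero k] :
    let P := MvPowerSeries (Fin 3) k
    let I : Ideal P := Ideal.span {(MvPowerSeries.X 0 : P) * MvPowerSeries.X 1}
    let R := P ⧸ I
    let x : R := Ideal.Quotient.mk I (MvPowerSeries.X 0)
    let y : R := Ideal.Quotient.mk I (MvPowerSeries.X 1)
    let z : R := Ideal.Quotient.mk I (MvPowerSeries.X 2)
    let J : Ideal R := Ideal.span {z}
    let Sing1 : Ideal R := J ⊔ Ideal.span {r : R | ∃ D : Derivation k R R, r = D z}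
    let S := R ⧸ J
    let Ω := (Fin 2 → S) ⧸ Submodule.span S
      ({![Ideal.Quotient.mk J y, Ideal.Quotient.mk J x]} : Set (Fin 2 → S))
    Sing1 = ⊤ ∧
      Ideal.comap (Ideal.Quotient.mk J) (fittingIdeal S Ω 1) = Ideal.span {x, y, z} ∧
      Ideal.span {x, y, z} ≠ (⊤ : Ideal R) :=
  stmt_18_general k
end
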